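/- Let Ω = {1,...,k} with uniform prior p, u_s(q) = ‖q‖_∞, and for 1 ≤ i ≤ m = k−1 the constraint functions f_i(q) = q(i) with thresholds c_i = 1/k. Then: (a) the only Bayes-plausible scheme satisfying all m ex post constraints is the point mass on p, giving Sender utility 1/k; (b) full revelation satisfies all m ex ante constraints and gives Sender utility 1. Hence the ex-ante-vs-ex-post multiplicative gap is k = m+1. -/

import Mathlib

open MeasureTheory

/-!
Bayes plausibility fixes the mean of every coordinate `q i` of the posterior. An ex post
constraint `q i ≤ p i` then holds with equality almost surely, since a random variable bounded
above by its mean equals it. With all coordinates but one pinned down, the remaining one is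
forced by `∑ i, q i = 1`, so every posterior equals the prior. Full revelation, by contrast,
meets each ex ante constraint with equality while every posterior is a vertex of sup norm `1`.
-/

section StdSimplex

variable {𝕜 ι : Type*} [Fintype ι]

lemma eq_of_mem_stdSimplex_of_forall_ne [Ring 𝕜] [PartialOrder 𝕜] {q r : ι → 𝕜}
    (hq : q ∈ stdSimplex 𝕜 ι) (hr : r ∈ stdSimplex 𝕜 ι) {i₀ : ι}
    (h : ∀ i ≠ i₀, q i = r i) : q = r := by
  classical
  funext i
  by_cases hi : i = i₀
  · subst hi
    have hrest : ∑ j ∈ Finset.univ.erase i, q j = ∑ j ∈ Finset.univ.erase i, r j :=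
      Finset.sum_congr rfl fun j hj => h j (Finset.ne_of_mem_erase hj)
    have hsum := hq.2.trans hr.2.symm
    rw [← Finset.add_sum_erase _ _ (Finset.mem_univ i),
      ← Finset.add_sum_erase _ _ (Finset.mem_univ i), hrest] at hsum
    exact add_right_cancel hsum
  · exact h i hi

lemma const_inv_card_mem_stdSimplex [Field 𝕜] [LinearOrder 𝕜] [IsStrictOrderedRing 𝕜]
    [Nonempty ι] : (fun _ => (Fintype.card ι : 𝕜)⁻¹) ∈ stdSimplex 𝕜 ι :=
  ⟨fun _ => by positivity, by simp⟩

end StdSimplex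

section Measure

variable {α : Type*} [MeasurableSpace α]

lemma ae_eq_of_ae_le_of_integral_eq {μ : Measure α} [IsProbabilityMeasure μ] {f : α → ℝ}
    {c : ℝ} (hf : Integrable f μ) (hle : ∀ᵐ x ∂μ, f x ≤ c)
    (hint : ∫ x, f x ∂μ = c) :
    ∀ᵐ x ∂μ, f x = c :=
  (integral_eq_iff_of_ae_le hf (integrable_const c) hle).1 (by simpa using hint)

lemma MeasureTheory.Measure.eq_dirac_of_ae_eq {P : Measure α} [IsProbabilityMeasure P] {a : α}
    (h : ∀ᵐ x ∂P, x = a) : P = Measure.dirac a := by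
  simpa using (ProbabilityTheory.hasLaw_dirac_of_ae_eq (X := id) h).map_eq

variable {ι : Type*} [Fintype ι]

lemma isProbabilityMeasure_inv_card_smul_sum_dirac [Nonempty ι] (x : ι → α) :
    IsProbabilityMeasure ((Fintype.card ι : ENNReal)⁻¹ • ∑ i, Measure.dirac (x i)) := by
  constructor
  simp [ENNReal.inv_mul_cancel]

lemma integral_smul_sum_dirac [MeasurableSingletonClass α] {E : Type*} [NormedAddCommGroup E]
    [NormedSpace ℝ E] [CompleteSpace E] (c : ENNReal) (x : ι → α) (f : α → E) :
    ∫ a, f a ∂(c • ∑ i, Measure.dirac (x i)) = c.toReal • ∑ i, f (x i) := by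
  rw [integral_smul_measure,
    integral_finsetSum_measure fun i _ => integrable_dirac enorm_lt_top]
  simp only [integral_dirac]

end Measure

section Posterior

variable {ι : Type*} [Fintype ι]

lemma integrable_eval_of_ae_mem_stdSimplex {P : Measure (ι → ℝ)} [IsFiniteMeasure P]
    (hP : ∀ᵐ q ∂P, q ∈ stdSimplex ℝ ι) (i : ι) : Integrable (fun q => q i) P := by
  refine .of_bound (measurable_pi_apply i).aestronglyMeasurable 1 ?_
  filter_upwards [hP] with q hq
  obtain ⟨h0, h1⟩ := mem_Icc_of_mem_stdSimplex hq i
  rwa [Real.norm_of_nonneg h0]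

theorem eq_dirac_of_integral_eval_eq_of_ae_eval_le {P : Measure (ι → ℝ)}
    [IsProbabilityMeasure P] {p : ι → ℝ} (hp : p ∈ stdSimplex ℝ ι)
    (hP : ∀ᵐ q ∂P, q ∈ stdSimplex ℝ ι) (hmean : ∀ i, ∫ q, q i ∂P = p i) {i₀ : ι}
    (hpost : ∀ i ≠ i₀, ∀ᵐ q ∂P, q i ≤ p i) : P = Measure.dirac p := by
  have hcoord : ∀ i ≠ i₀, ∀ᵐ q ∂P, q i = p i := fun i hi =>
    ae_eq_of_ae_le_of_integral_eq (integrable_eval_of_ae_mem_stdSimplex hP i) (hpost i hi)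
      (hmean i)
  refine Measure.eq_dirac_of_ae_eq ?_
  filter_upwards [ae_all_iff.2 fun i => Filter.eventually_imp_distrib_left.2 (hcoord i), hP]
    with q hq hqS
  exact eq_of_mem_stdSimplex_of_forall_ne hqS hp hq

end Posterior

theorem stmt11 (k : ℕ) (hk : 0 < k) :
    let fullRev : Measure (Fin k → ℝ) :=
      (k : ENNReal)⁻¹ • ∑ i : Fin k, Measure.dirac (fun j => if j = i then (1 : ℝ) else 0);
    (∀ P : Measure (Fin k → ℝ), IsProbabilityMeasure P →
      (∀ᵐ q ∂P, q ∈ stdSimplex ℝ (Fin k)) →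
      (∀ i : Fin k, (∫ q, q i ∂P) = 1 / (k:ℝ)) →
      (∀ i : Fin k, (i : ℕ) < k - 1 → ∀ᵐ q ∂P, q i ≤ 1 / (k:ℝ)) →
      P = Measure.dirac (fun _ => 1 / (k : ℝ)) ∧ (∫ q, ‖q‖ ∂P) = 1 / (k:ℝ)) ∧
    IsProbabilityMeasure fullRev ∧
    (∀ i : Fin k, (∫ q, q i ∂fullRev) = 1 / (k:ℝ)) ∧
    (∫ q, ‖q‖ ∂fullRev) = 1 := by
  intro fullRev
  have : Nonempty (Fin k) := ⟨⟨0, hk⟩⟩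
  have hvertex (i : Fin k) : ‖fun j => if j = i then (1 : ℝ) else 0‖ = 1 := by
    have hsingle : (fun j => if j = i then (1 : ℝ) else 0) = Pi.single i 1 := by
      ext j
      simp [Pi.single_apply]
    rw [hsingle, Pi.norm_single, norm_one]
  refine ⟨fun P hP hsupp hmean hpost => ?_, ?_, fun i => ?_, ?_⟩
  · have hprior : (fun _ => 1 / (k : ℝ)) ∈ stdSimplex ℝ (Fin k) := by
      simpa using const_inv_card_mem_stdSimplex (𝕜 := ℝ) (ι := Fin k)
    have hPeq : P = Measure.dirac (fun _ => 1 / (k : ℝ)) :=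
      eq_dirac_of_integral_eval_eq_of_ae_eval_le hprior hsupp hmean (i₀ := ⟨k - 1, by omega⟩)
        fun i hi => hpost i ((Nat.le_sub_one_of_lt i.isLt).lt_of_ne (Fin.val_ne_of_ne hi))
    refine ⟨hPeq, ?_⟩
    rw [hPeq, integral_dirac, pi_norm_const, Real.norm_of_nonneg (by positivity)]
  · simpa using isProbabilityMeasure_inv_card_smul_sum_dirac (ι := Fin k)
      fun i j => if j = i then (1 : ℝ) else 0
  · rw [integral_smul_sum_dirac]
    simp
  · rw [integral_smul_sum_dirac]
    simp [hvertex, hk.ne']
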